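/- Let X and Y be partially ordered sets, let φ : X → Y be an order embedding, and let F ⊆ Y be a cut. If ( ⋃ {φ^#(U) | U a cut of X with φ^#(U) ⊆ F} )^{ul} = ⋂ {φ^#(V) | V a cut of X with F ⊆ φ^#(V)}, and this common value equals F (equivalently, the collapsed chain of inclusions forces it to equal F, which holds since the supremum side is contained in F and F is contained in the infimum side), then there exists a cut A ⊆ X with φ^#(A) = F; indeed A = ⋂ {V | V a cut of X with F ⊆ φ^#(V)} is such a solution. -/

import Mathlib

/-- `ul A = (A^u)^l`: the lower bounds of the set of upper bounds of `A`. -/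
def ul {X : Type*} [PartialOrder X] (A : Set X) : Set X :=
  lowerBounds (upperBounds A)

/-- `A` is a cut if `A^{ul} = A`. -/
def IsCut {X : Type*} [PartialOrder X] (A : Set X) : Prop :=
  ul A = A

/-- `φ^#(A) = (φ(A))^{ul}`. -/
def sharp {X Y : Type*} [PartialOrder X] [PartialOrder Y] (φ : X → Y) (A : Set X) : Set Y :=
  ul (φ '' A)

/-!
The candidate `A` is an intersection of cuts, hence a cut, and it is the least cut `V`
with `F ⊆ φ^#(V)`. Since `φ^#` is monotone, `φ^#(A)` lies in every `φ^#(V)` with `F ⊆ φ^#(V)`,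
i.e. in the infimum side, which is `F`. Conversely, because `φ` is an order embedding,
`φ^#(U) ⊆ φ^#(V)` forces `U ⊆ V` for a cut `V`; so every `U` on the supremum side lies in `A`,
and `F`, the closure of the supremum side, lies in the closed set `φ^#(A)`.
-/

section Cut

variable {X : Type*} [PartialOrder X]

lemma subset_ul (A : Set X) : A ⊆ ul A :=
  subset_lowerBounds_upperBounds A

lemma ul_mono {A B : Set X} (h : A ⊆ B) : ul A ⊆ ul B :=
  lowerBounds_mono_set (upperBounds_mono_set h)

lemma upperBounds_ul (A : Set X) : upperBounds (ul A) = upperBounds A :=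
  (upperBounds_mono_set (subset_ul A)).antisymm fun _ hb _ hx => hx hb

lemma ul_ul (A : Set X) : ul (ul A) = ul A :=
  congrArg lowerBounds (upperBounds_ul A)

lemma isCut_ul (A : Set X) : IsCut (ul A) :=
  ul_ul A

lemma isCut_sInter {S : Set (Set X)} (hS : ∀ V ∈ S, IsCut V) : IsCut (⋂₀ S) :=
  (Set.subset_sInter fun V hV => hS V hV ▸ ul_mono (Set.sInter_subset_of_mem hV)).antisymm
    (subset_ul _)

end Cut

section Sharp

variable {X Y : Type*} [PartialOrder X] [PartialOrder Y] {φ : X → Y}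

lemma sharp_mono {A B : Set X} (h : A ⊆ B) : sharp φ A ⊆ sharp φ B :=
  ul_mono (Set.image_mono h)

lemma mem_ul_of_apply_mem_sharp (hφ : ∀ a b : X, φ a ≤ φ b ↔ a ≤ b) {V : Set X} {a : X}
    (ha : φ a ∈ sharp φ V) : a ∈ ul V := fun w hw =>
  (hφ a w).mp <| ha <| Set.forall_mem_image.mpr fun v hv => (hφ v w).mpr (hw hv)

lemma IsCut.subset_of_sharp_subset (hφ : ∀ a b : X, φ a ≤ φ b ↔ a ≤ b) {U V : Set X}
    (hV : IsCut V) (h : sharp φ U ⊆ sharp φ V) : U ⊆ V := fun _ hu =>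
  hV ▸ mem_ul_of_apply_mem_sharp hφ (h (subset_ul _ (Set.mem_image_of_mem φ hu)))

end Sharp

theorem stmt1_general {X Y : Type*} [PartialOrder X] [PartialOrder Y] (φ : X → Y)
    (hφ : ∀ a b : X, φ a ≤ φ b ↔ a ≤ b) (F : Set Y)
    (heq : ul (⋃₀ {S : Set Y | ∃ U : Set X, IsCut U ∧ sharp φ U ⊆ F ∧ S = sharp φ U}) =
      ⋂₀ {S : Set Y | ∃ V : Set X, IsCut V ∧ F ⊆ sharp φ V ∧ S = sharp φ V})
    (hFeq : ul (⋃₀ {S : Set Y | ∃ U : Set X, IsCut U ∧ sharp φ U ⊆ F ∧ S = sharp φ U}) = F) :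
    IsCut (⋂₀ {V : Set X | IsCut V ∧ F ⊆ sharp φ V}) ∧
      sharp φ (⋂₀ {V : Set X | IsCut V ∧ F ⊆ sharp φ V}) = F := by
  set A := ⋂₀ {V : Set X | IsCut V ∧ F ⊆ sharp φ V}
  have hA_le {V : Set X} (hV : IsCut V) (hFV : F ⊆ sharp φ V) : A ⊆ V :=
    Set.sInter_subset_of_mem ⟨hV, hFV⟩
  refine ⟨isCut_sInter fun V hV => hV.1, subset_antisymm ?_ ?_⟩
  · rw [← hFeq, heq]
    rintro y hy _ ⟨V, hV, hFV, rfl⟩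
    exact sharp_mono (hA_le hV hFV) hy
  · have hsup_le : ⋃₀ {S : Set Y | ∃ U : Set X, IsCut U ∧ sharp φ U ⊆ F ∧ S = sharp φ U} ⊆
        sharp φ A := by
      rintro y ⟨_, ⟨U, -, hUF, rfl⟩, hy⟩
      exact sharp_mono (Set.subset_sInter fun _ hV =>
        hV.1.subset_of_sharp_subset hφ (hUF.trans hV.2)) hy
    rw [← hFeq]
    exact (ul_mono hsup_le).trans (isCut_ul _).subset

theorem stmt1 {X Y : Type*} [PartialOrder X] [PartialOrder Y] (φ : X → Y)
    (hφ : ∀ a b : X, φ a ≤ φ b ↔ a ≤ b) (F : Set Y) (hF : IsCut F)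
    (heq : ul (⋃₀ {S : Set Y | ∃ U : Set X, IsCut U ∧ sharp φ U ⊆ F ∧ S = sharp φ U}) =
      ⋂₀ {S : Set Y | ∃ V : Set X, IsCut V ∧ F ⊆ sharp φ V ∧ S = sharp φ V})
    (hFeq : ul (⋃₀ {S : Set Y | ∃ U : Set X, IsCut U ∧ sharp φ U ⊆ F ∧ S = sharp φ U}) = F) :
    IsCut (⋂₀ {V : Set X | IsCut V ∧ F ⊆ sharp φ V}) ∧
      sharp φ (⋂₀ {V : Set X | IsCut V ∧ F ⊆ sharp φ V}) = F :=
  stmt1_general φ hφ F heq hFeq
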